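/- arXiv:2401.03857 — 3 statements merged into one kernel-verified Lean document; each statement's English description precedes it below -/
import Mathlib

section
/- Let M be a finite MDP\R with policy π_E. A reward r ∈ ℝ^{S×A} makes π_E optimal for M ∪ r (i.e., the advantage A^{π_E}_{M∪r}(s,a) ≤ 0 for all (s,a), with equality whenever π_E(a|s) > 0) if and only if there exist ζ ∈ ℝ^{S×A} with ζ ≥ 0 and V ∈ ℝ^S such that r = −B̄^{π_E} ζ + (E − γP)V, where (B̄^{π_E}ζ)(s,a) = 1{π_E(a|s)=0} ζ(s,a). -/
/-!
Forward direction: take `V := π_E Q` and `ζ := V - Q`, the negated advantage, which is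
nonnegative and vanishes wherever `π_E(a|s) > 0`.

Backward direction: the penalty `B̄ζ` is invisible under `π_E`, so `d := π_E Q - V` satisfies
`d = γ K d` for the state-to-state Markov kernel `K = π_E P`. Since `γ < 1` this forces `d = 0`,
i.e. `π_E Q = V` and `Q = V - B̄ζ`, so the advantage is `-B̄ζ`.
-/

open Finset

lemma abs_sum_mul_le_of_sum_eq_one {ι : Type*} [Fintype ι] {w x : ι → ℝ}
    (hw0 : ∀ i, 0 ≤ w i) (hw1 : ∑ i, w i = 1) {M : ℝ} (hx : ∀ i, |x i| ≤ M) :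
    |∑ i, w i * x i| ≤ M :=
  calc |∑ i, w i * x i| ≤ ∑ i, |w i * x i| := abs_sum_le_sum_abs _ _
    _ = ∑ i, w i * |x i| := by simp only [abs_mul, abs_of_nonneg (hw0 _)]
    _ ≤ ∑ i, w i * M := sum_le_sum fun i _ => mul_le_mul_of_nonneg_left (hx i) (hw0 i)
    _ = M := by rw [← sum_mul, hw1, one_mul]

lemma eq_zero_of_eq_discount_mul_stochastic {S : Type*} [Fintype S] (K : S → S → ℝ)
    (hK0 : ∀ s s', 0 ≤ K s s') (hK1 : ∀ s, ∑ s', K s s' = 1) {γ : ℝ} (hγ0 : 0 ≤ γ)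
    (hγ1 : γ < 1) {d : S → ℝ} (hd : ∀ s, d s = γ * ∑ s', K s s' * d s') : d = 0 := by
  funext s
  have : Nonempty S := ⟨s⟩
  obtain ⟨s₀, hs₀⟩ := Finite.exists_max fun s => |d s|
  have hle : |d s₀| ≤ γ * |d s₀| :=
    calc |d s₀| = γ * |∑ s', K s₀ s' * d s'| := by rw [hd s₀, abs_mul, abs_of_nonneg hγ0]
      _ ≤ γ * |d s₀| :=
        mul_le_mul_of_nonneg_left (abs_sum_mul_le_of_sum_eq_one (hK0 s₀) (hK1 s₀) hs₀) hγ0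
  have hmax : |d s₀| = 0 := by nlinarith [abs_nonneg (d s₀)]
  exact abs_nonpos_iff.mp (hmax ▸ hs₀ s)

section MDP

variable {S A : Type} [Fintype A]

lemma policy_kernel_nonneg (p : S → A → S → ℝ) (hp0 : ∀ s a s', 0 ≤ p s a s')
    (πE : S → A → ℝ) (hπ0 : ∀ s a, 0 ≤ πE s a) (s s' : S) :
    0 ≤ ∑ a, πE s a * p s a s' :=
  sum_nonneg fun a _ => mul_nonneg (hπ0 s a) (hp0 s a s')

lemma policy_kernel_sum_eq_one [Fintype S] (p : S → A → S → ℝ) (hp1 : ∀ s a, ∑ s', p s a s' = 1)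
    (πE : S → A → ℝ) (hπ1 : ∀ s, ∑ a, πE s a = 1) (s : S) :
    ∑ s', ∑ a, πE s a * p s a s' = 1 := by
  simp only [sum_comm (γ := S), ← mul_sum, hp1, mul_one, hπ1]

lemma sum_mul_ite_eq_zero (πE ζ : S → A → ℝ) (s : S) :
    ∑ a, πE s a * (if πE s a = 0 then ζ s a else 0) = 0 :=
  sum_eq_zero fun a _ => by split_ifs with h <;> simp [h]

lemma exists_penalty_potential_of_optimal [Fintype S] (p : S → A → S → ℝ) (πE : S → A → ℝ)
    (hπ0 : ∀ s a, 0 ≤ πE s a) (γ : ℝ) (r Q : S → A → ℝ)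
    (hQ : ∀ s a, Q s a = r s a + γ * ∑ s', p s a s' * ∑ a', πE s' a' * Q s' a')
    (hgreedy : ∀ s a, 0 < πE s a → Q s a = ∑ a', πE s a' * Q s a')
    (hopt : ∀ s a, Q s a ≤ ∑ a', πE s a' * Q s a') :
    ∃ (ζ : S → A → ℝ) (V : S → ℝ), (∀ s a, 0 ≤ ζ s a) ∧
      ∀ s a, r s a =
        -(if πE s a = 0 then ζ s a else 0) + (V s - γ * ∑ s', p s a s' * V s') := by
  refine ⟨fun s a => (∑ a', πE s a' * Q s a') - Q s a, fun s => ∑ a', πE s a' * Q s a',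
    fun s a => sub_nonneg.2 (hopt s a), fun s a => ?_⟩
  dsimp only
  split_ifs with hπ
  · linarith [hQ s a]
  · linarith [hQ s a, hgreedy s a ((hπ0 s a).lt_of_ne' hπ)]

lemma optimal_of_eq_penalty_add_potential [Fintype S] (p : S → A → S → ℝ) (hp0 : ∀ s a s', 0 ≤ p s a s')
    (hp1 : ∀ s a, ∑ s', p s a s' = 1)
    (πE : S → A → ℝ) (hπ0 : ∀ s a, 0 ≤ πE s a) (hπ1 : ∀ s, ∑ a, πE s a = 1)
    (γ : ℝ) (hγ0 : 0 ≤ γ) (hγ1 : γ < 1) (r Q ζ : S → A → ℝ) (V : S → ℝ)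
    (hQ : ∀ s a, Q s a = r s a + γ * ∑ s', p s a s' * ∑ a', πE s' a' * Q s' a')
    (hζ : ∀ s a, 0 ≤ ζ s a)
    (hr : ∀ s a, r s a =
      -(if πE s a = 0 then ζ s a else 0) + (V s - γ * ∑ s', p s a s' * V s')) :
    (∀ s a, 0 < πE s a → Q s a = ∑ a', πE s a' * Q s a') ∧
      (∀ s a, Q s a ≤ ∑ a', πE s a' * Q s a') := by
  set d : S → ℝ := fun s => (∑ a, πE s a * Q s a) - V s with hd
  have hQd : ∀ s a, Q s a =
      -(if πE s a = 0 then ζ s a else 0) + V s + γ * ∑ s', p s a s' * d s' := by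
    intro s a
    simp only [hd, mul_sub, sum_sub_distrib]
    rw [hQ s a, hr s a]
    ring
  have hd_fix : ∀ s, d s = γ * ∑ s', (∑ a, πE s a * p s a s') * d s' := by
    intro s
    have hπQ : ∑ a, πE s a * Q s a = V s + γ * ∑ a, πE s a * ∑ s', p s a s' * d s' := by
      simp only [hQd, mul_add, sum_add_distrib, sum_mul_ite_eq_zero, ← sum_mul, hπ1,
        mul_neg, sum_neg_distrib, neg_zero, zero_add, one_mul, mul_left_comm _ γ, ← mul_sum]
    simp only [hd, hπQ, sum_mul, mul_sum, mul_assoc]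
    rw [sum_comm]
    ring
  have hd0 : d = 0 := eq_zero_of_eq_discount_mul_stochastic _
    (policy_kernel_nonneg p hp0 πE hπ0) (policy_kernel_sum_eq_one p hp1 πE hπ1) hγ0 hγ1 hd_fix
  have hπQ : ∀ s, ∑ a, πE s a * Q s a = V s := fun s => sub_eq_zero.mp (congrFun hd0 s)
  have hadv : ∀ s a, Q s a = -(if πE s a = 0 then ζ s a else 0) + ∑ a', πE s a' * Q s a' := by
    intro s a
    simp [hQd s a, hπQ s, hd0]
  refine ⟨fun s a hπ => ?_, fun s a => ?_⟩
  · rw [hadv s a, if_neg hπ.ne']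
    ring
  · rw [hadv s a]
    split_ifs
    · linarith [hζ s a]
    · simp

end MDP

/-- A reward `r` makes `π_E` optimal for `M ∪ r` iff there exist
`ζ ≥ 0` and `V` with `r = −B̄^{π_E} ζ + (E − γP)V`. -/
theorem stmt_3 {S A : Type} [Fintype S] [Fintype A]
    (p : S → A → S → ℝ) (hp0 : ∀ s a s', 0 ≤ p s a s')
    (hp1 : ∀ s a, ∑ s', p s a s' = 1)
    (πE : S → A → ℝ) (hπ0 : ∀ s a, 0 ≤ πE s a) (hπ1 : ∀ s, ∑ a, πE s a = 1)
    (γ : ℝ) (hγ0 : 0 ≤ γ) (hγ1 : γ < 1)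
    (r : S → A → ℝ) (Q : S → A → ℝ)
    (hQ : ∀ s a, Q s a = r s a + γ * ∑ s', p s a s' * ∑ a', πE s' a' * Q s' a') :
    ((∀ s a, 0 < πE s a → Q s a = ∑ a', πE s a' * Q s a') ∧
       (∀ s a, Q s a ≤ ∑ a', πE s a' * Q s a')) ↔
    ∃ (ζ : S → A → ℝ) (V : S → ℝ), (∀ s a, 0 ≤ ζ s a) ∧
      ∀ s a, r s a =
        -(if πE s a = 0 then ζ s a else 0) + (V s - γ * ∑ s', p s a s' * V s') := by
  constructor
  · rintro ⟨hgreedy, hopt⟩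
    exact exists_penalty_potential_of_optimal p πE hπ0 γ r Q hQ hgreedy hopt
  · rintro ⟨ζ, V, hζ, hr⟩
    exact optimal_of_eq_penalty_add_potential p hp0 hp1 πE hπ0 hπ1 γ hγ0 hγ1 r Q ζ V hQ hζ hr
end

section
/- Let M be a finite MDP\R with optimal expert policy π_{E_1} and sub-optimal expert policy π_{E_i} with sub-optimality bound ξ_i > 0. Suppose r = −B̄^{π_{E_1}} ζ + (E − γP)V with ζ ≥ 0. Then V^{π_{E_1}}_{M∪r}(s) − V^{π_{E_i}}_{M∪r}(s) ≤ ξ_i holds for all s ∈ S if and only if (I_S − γ π_{E_i} P)^{-1} π_{E_i} B̄^{π_{E_1}} ζ ≤ ξ_i · 1_S componentwise. -/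
open Matrix

/-!
Write `P_π s s' = ∑ a, π s a * p s a s'` for the state transition matrix of a policy `π`.
Since `P_π` is row-stochastic, `1 - γ P_π` is invertible for `|γ| < 1` (its Neumann series
converges in the `ℓ∞` operator norm). Averaging `r` over `π` gives
`(1 - γ P_π) V - π (B̄^{π₁} ζ)`, and the penalty term vanishes for `π = π₁`, which only plays
actions outside the support of `B̄^{π₁}`. Hence `V^{π₁} = V` and
`V^{πᵢ} = V - (1 - γ P_{πᵢ})⁻¹ πᵢ B̄^{π₁} ζ`, so the value gap is exactly the right-hand side.
-/

namespace Matrix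

section LinftyOpNorm

attribute [local instance] Matrix.linftyOpNormedRing Matrix.linftyOpNormedAlgebra

variable {n : Type*} [Fintype n] [DecidableEq n]

theorem linfty_opNorm_le_one_of_mem_rowStochastic {M : Matrix n n ℝ}
    (hM : M ∈ rowStochastic ℝ n) : ‖M‖ ≤ 1 := by
  rw [linfty_opNorm_def, NNReal.coe_le_one]
  refine Finset.sup_le fun i _ => ?_
  rw [← NNReal.coe_le_one, NNReal.coe_sum]
  simp only [coe_nnnorm, Real.norm_of_nonneg (nonneg_of_mem_rowStochastic hM),
    sum_row_of_mem_rowStochastic hM i, le_refl]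

theorem isUnit_one_sub_smul_of_mem_rowStochastic {M : Matrix n n ℝ}
    (hM : M ∈ rowStochastic ℝ n) {γ : ℝ} (hγ : |γ| < 1) : IsUnit (1 - γ • M) := by
  refine isUnit_one_sub_of_norm_lt_one ?_
  calc ‖γ • M‖ ≤ ‖γ‖ * ‖M‖ := norm_smul_le γ M
    _ ≤ |γ| * 1 := by
      rw [Real.norm_eq_abs]
      exact mul_le_mul_of_nonneg_left (linfty_opNorm_le_one_of_mem_rowStochastic hM)
        (abs_nonneg γ)
    _ < 1 := by rwa [mul_one]

end LinftyOpNorm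

theorem inv_mulVec_mulVec_sub {n R : Type*} [Fintype n] [DecidableEq n] [CommRing R]
    {A : Matrix n n R} (hA : IsUnit A) (v w : n → R) :
    A⁻¹ *ᵥ (A *ᵥ v - w) = v - A⁻¹ *ᵥ w := by
  rw [mulVec_sub, mulVec_mulVec, nonsing_inv_mul _ ((isUnit_iff_isUnit_det A).mp hA),
    one_mulVec]

end Matrix

theorem sum_mul_penalty_off_support {S A R : Type*} [Fintype A] [NonUnitalNonAssocSemiring R]
    [DecidableEq R] (π ζ : S → A → R) (s : S) :
    ∑ a, π s a * (if π s a = 0 then ζ s a else 0) = 0 :=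
  Finset.sum_eq_zero fun a _ => by split_ifs with h <;> simp [h]

section PolicyTransition

variable {S A : Type*} [Fintype S] [Fintype A]

def policyTransition (π : S → A → ℝ) (p : S → A → S → ℝ) : Matrix S S ℝ :=
  Matrix.of fun s s' => ∑ a, π s a * p s a s'

theorem policyTransition_mem_rowStochastic [DecidableEq S] {π : S → A → ℝ} {p : S → A → S → ℝ}
    (hπ0 : ∀ s a, 0 ≤ π s a) (hπ1 : ∀ s, ∑ a, π s a = 1)
    (hp0 : ∀ s a s', 0 ≤ p s a s') (hp1 : ∀ s a, ∑ s', p s a s' = 1) :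
    policyTransition π p ∈ rowStochastic ℝ S := by
  refine mem_rowStochastic_iff_sum.mpr ⟨fun s s' => ?_, fun s => ?_⟩
  · exact Finset.sum_nonneg fun a _ => mul_nonneg (hπ0 s a) (hp0 s a s')
  · simp only [policyTransition, of_apply]
    rw [Finset.sum_comm]
    simp only [← Finset.mul_sum, hp1, mul_one, hπ1]

theorem sum_policy_mul_bellman [DecidableEq S] {π : S → A → ℝ} (hπ1 : ∀ s, ∑ a, π s a = 1)
    (p : S → A → S → ℝ) (γ : ℝ) (V : S → ℝ) (s : S) :
    ∑ a, π s a * (V s - γ * ∑ s', p s a s' * V s') =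
      ((1 - γ • policyTransition π p) *ᵥ V) s := by
  rw [sub_mulVec, one_mulVec, smul_mulVec, Pi.sub_apply, Pi.smul_apply, smul_eq_mul]
  simp only [mul_sub, Finset.sum_sub_distrib, ← Finset.sum_mul, hπ1, one_mul]
  congr 1
  simp only [mulVec, dotProduct, policyTransition, of_apply, Finset.mul_sum, Finset.sum_mul]
  rw [Finset.sum_comm]
  simp only [mul_left_comm, mul_assoc]

theorem sum_policy_mul_shapedReward [DecidableEq S] {π : S → A → ℝ}
    (hπ1 : ∀ s, ∑ a, π s a = 1) (p : S → A → S → ℝ) (γ : ℝ) (b r : S → A → ℝ) (V : S → ℝ)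
    (hr : ∀ s a, r s a = -b s a + (V s - γ * ∑ s', p s a s' * V s')) :
    (fun s => ∑ a, π s a * r s a) =
      (1 - γ • policyTransition π p) *ᵥ V - fun s => ∑ a, π s a * b s a := by
  funext s
  simp only [hr, mul_add, mul_neg, Finset.sum_add_distrib, Finset.sum_neg_distrib,
    sum_policy_mul_bellman hπ1, Pi.sub_apply]
  ring

end PolicyTransition

theorem stmt_5_general {S A : Type} [Fintype S] [DecidableEq S] [Fintype A]
    (p : S → A → S → ℝ) (hp0 : ∀ s a s', 0 ≤ p s a s')
    (hp1 : ∀ s a, ∑ s', p s a s' = 1)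
    (π1 πi : S → A → ℝ)
    (hπ10 : ∀ s a, 0 ≤ π1 s a) (hπ11 : ∀ s, ∑ a, π1 s a = 1)
    (hπi0 : ∀ s a, 0 ≤ πi s a) (hπi1 : ∀ s, ∑ a, πi s a = 1)
    (γ : ℝ) (hγ0 : 0 ≤ γ) (hγ1 : γ < 1)
    (ξ : ℝ)
    (ζ : S → A → ℝ) (V : S → ℝ)
    (r : S → A → ℝ)
    (hr : ∀ s a, r s a =
      -(if π1 s a = 0 then ζ s a else 0) + (V s - γ * ∑ s', p s a s' * V s'))
    (M1 Mi : Matrix S S ℝ)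
    (hM1 : ∀ s s', M1 s s' = ∑ a, π1 s a * p s a s')
    (hMi : ∀ s s', Mi s s' = ∑ a, πi s a * p s a s') :
    (∀ s, ((1 - γ • M1)⁻¹ *ᵥ (fun s => ∑ a, π1 s a * r s a)) s
            - ((1 - γ • Mi)⁻¹ *ᵥ (fun s => ∑ a, πi s a * r s a)) s ≤ ξ) ↔
    (∀ s, ((1 - γ • Mi)⁻¹ *ᵥ
        (fun s => ∑ a, πi s a * (if π1 s a = 0 then ζ s a else 0))) s ≤ ξ) := by
  obtain rfl : M1 = policyTransition π1 p := Matrix.ext hM1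
  obtain rfl : Mi = policyTransition πi p := Matrix.ext hMi
  have hγ : |γ| < 1 := abs_lt.mpr ⟨by linarith, hγ1⟩
  have hU1 := isUnit_one_sub_smul_of_mem_rowStochastic
    (policyTransition_mem_rowStochastic hπ10 hπ11 hp0 hp1) hγ
  have hUi := isUnit_one_sub_smul_of_mem_rowStochastic
    (policyTransition_mem_rowStochastic hπi0 hπi1 hp0 hp1) hγ
  have hV1 : (1 - γ • policyTransition π1 p)⁻¹ *ᵥ (fun s => ∑ a, π1 s a * r s a) = V := by
    rw [sum_policy_mul_shapedReward hπ11 p γ _ r V hr, inv_mulVec_mulVec_sub hU1]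
    simp only [sum_mul_penalty_off_support]
    rw [← Pi.zero_def, mulVec_zero, sub_zero]
  rw [hV1, sum_policy_mul_shapedReward hπi1 p γ _ r V hr, inv_mulVec_mulVec_sub hUi]
  simp only [Pi.sub_apply, sub_sub_cancel]

/-- For `r = −B̄^{π_{E_1}}ζ + (E−γP)V` with `ζ ≥ 0`, the condition
`V^{π_{E_1}}(s) − V^{π_{E_i}}(s) ≤ ξ_i` for all `s` holds iff
`(I_S − γπ_{E_i}P)⁻¹ π_{E_i} B̄^{π_{E_1}} ζ ≤ ξ_i · 1_S` componentwise. -/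
theorem stmt_5 {S A : Type} [Fintype S] [DecidableEq S] [Fintype A]
    (p : S → A → S → ℝ) (hp0 : ∀ s a s', 0 ≤ p s a s')
    (hp1 : ∀ s a, ∑ s', p s a s' = 1)
    (π1 πi : S → A → ℝ)
    (hπ10 : ∀ s a, 0 ≤ π1 s a) (hπ11 : ∀ s, ∑ a, π1 s a = 1)
    (hπi0 : ∀ s a, 0 ≤ πi s a) (hπi1 : ∀ s, ∑ a, πi s a = 1)
    (γ : ℝ) (hγ0 : 0 ≤ γ) (hγ1 : γ < 1)
    (ξ : ℝ) (hξ : 0 < ξ)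
    (ζ : S → A → ℝ) (hζ : ∀ s a, 0 ≤ ζ s a) (V : S → ℝ)
    (r : S → A → ℝ)
    (hr : ∀ s a, r s a =
      -(if π1 s a = 0 then ζ s a else 0) + (V s - γ * ∑ s', p s a s' * V s'))
    (M1 Mi : Matrix S S ℝ)
    (hM1 : ∀ s s', M1 s s' = ∑ a, π1 s a * p s a s')
    (hMi : ∀ s s', Mi s s' = ∑ a, πi s a * p s a s') :
    (∀ s, ((1 - γ • M1)⁻¹ *ᵥ (fun s => ∑ a, π1 s a * r s a)) s
            - ((1 - γ • Mi)⁻¹ *ᵥ (fun s => ∑ a, πi s a * r s a)) s ≤ ξ) ↔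
    (∀ s, ((1 - γ • Mi)⁻¹ *ᵥ
        (fun s => ∑ a, πi s a * (if π1 s a = 0 then ζ s a else 0))) s ≤ ξ) :=
  stmt_5_general p hp0 hp1 π1 πi hπ10 hπ11 hπi0 hπi1 γ hγ0 hγ1 ξ ζ V r hr M1 Mi hM1 hMi
end

section
/- Let π_{E_1} and π_{E_i} be deterministic policies on a finite MDP\R and ξ_i > 0. If for every state s the expert-performance-gap constraint holds with equality, V^{π_{E_1}}_{M∪r}(s) − V^{π_{E_i}}_{M∪r}(s) = ξ_i, for a reward of the form r = −B̄^{π_{E_1}}ζ + (E−γP)V with ζ ≥ 0, then for every state-action pair (s,a) with π_{E_1}(a|s) = 0 and π_{E_i}(a|s) = 1, it must hold that ζ(s,a) = ξ_i(1−γ). -/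
/-!
The reward is `-ζ` off the actions of `π_{E_1}` plus the potential-based shaping `(I - γP)V`.
Hence `V` is the value of `π_{E_1}`, while the value of `π_{E_i}` is `V - (I - γP_{E_i})⁻¹ z`,
with `z s = ζ(s, π_{E_i}(s))` where the policies differ and `z s = 0` elsewhere. The gap
condition says `(I - γP_{E_i})⁻¹ z` is the constant `ξ`, and since `P_{E_i}` is row stochastic,
`z = (I - γP_{E_i}) ξ = ξ(1 - γ)`.
-/

open Matrix

section
variable {n : Type*} [Fintype n] [DecidableEq n]

theorem one_sub_smul_mulVec_apply {R : Type*} [CommRing R] (M : Matrix n n R) (γ : R)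
    (v : n → R) (i : n) :
    ((1 - γ • M) *ᵥ v) i = v i - γ * ∑ j, M i j * v j := by
  rw [sub_mulVec, Pi.sub_apply, one_mulVec, smul_mulVec, Pi.smul_apply, smul_eq_mul, mulVec,
    dotProduct]

theorem isUnit_det_one_sub_smul_of_mem_rowStochastic {M : Matrix n n ℝ}
    (hM : M ∈ rowStochastic ℝ n) {γ : ℝ} (hγ0 : 0 ≤ γ) (hγ1 : γ < 1) :
    IsUnit (1 - γ • M).det := by
  refine isUnit_iff_ne_zero.mpr (det_ne_zero_of_sum_row_lt_diag fun k => ?_)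
  have hoff : ∑ j ∈ Finset.univ.erase k, ‖(1 - γ • M) k j‖ = γ * (1 - M k k) := by
    rw [← sum_row_of_mem_rowStochastic hM k, ← Finset.add_sum_erase _ _ (Finset.mem_univ k),
      add_sub_cancel_left, Finset.mul_sum]
    refine Finset.sum_congr rfl fun j hj => ?_
    rw [Matrix.sub_apply, one_apply_ne (Finset.ne_of_mem_erase hj).symm, Matrix.smul_apply,
      smul_eq_mul, zero_sub, norm_neg,
      Real.norm_of_nonneg (mul_nonneg hγ0 (nonneg_of_mem_rowStochastic hM))]
  have hdiag : ‖(1 - γ • M) k k‖ = 1 - γ * M k k := by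
    have : γ * M k k ≤ 1 := by
      nlinarith [le_one_of_mem_rowStochastic hM (i := k) (j := k),
        nonneg_of_mem_rowStochastic hM (i := k) (j := k)]
    rw [Matrix.sub_apply, one_apply_eq, Matrix.smul_apply, smul_eq_mul,
      Real.norm_of_nonneg (by linarith)]
  rw [hoff, hdiag]
  linarith

theorem one_sub_smul_mulVec_const_of_mem_rowStochastic {M : Matrix n n ℝ}
    (hM : M ∈ rowStochastic ℝ n) (γ c : ℝ) :
    (1 - γ • M) *ᵥ (fun _ => c) = fun _ => c * (1 - γ) := by
  funext i
  rw [one_sub_smul_mulVec_apply, ← Finset.sum_mul, sum_row_of_mem_rowStochastic hM, one_mul]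
  ring

theorem inv_mulVec_mulVec_cancel {R : Type*} [CommRing R] {A : Matrix n n R} (hA : IsUnit A.det)
    (v : n → R) : A⁻¹ *ᵥ (A *ᵥ v) = v := by
  rw [mulVec_mulVec, nonsing_inv_mul A hA, one_mulVec]

theorem mulVec_inv_mulVec_cancel {R : Type*} [CommRing R] {A : Matrix n n R} (hA : IsUnit A.det)
    (v : n → R) : A *ᵥ (A⁻¹ *ᵥ v) = v := by
  rw [mulVec_mulVec, mul_nonsing_inv A hA, one_mulVec]

end

theorem policyMatrix_mem_rowStochastic {S A : Type*} [Fintype S] [DecidableEq S]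
    {p : S → A → S → ℝ} (hp0 : ∀ s a s', 0 ≤ p s a s') (hp1 : ∀ s a, ∑ s', p s a s' = 1)
    {f : S → A} {M : Matrix S S ℝ} (hM : ∀ s s', M s s' = p s (f s) s') :
    M ∈ rowStochastic ℝ S :=
  mem_rowStochastic_iff_sum.mpr
    ⟨fun s s' => hM s s' ▸ hp0 s (f s) s', fun s => by simp only [hM]; exact hp1 s (f s)⟩

theorem stmt_7_general {S A : Type} [Fintype S] [DecidableEq S] [Fintype A] [DecidableEq A]
    (p : S → A → S → ℝ) (hp0 : ∀ s a s', 0 ≤ p s a s')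
    (hp1 : ∀ s a, ∑ s', p s a s' = 1)
    (f1 fi : S → A)
    (γ : ℝ) (hγ0 : 0 ≤ γ) (hγ1 : γ < 1)
    (ξ : ℝ)
    (ζ : S → A → ℝ) (V : S → ℝ)
    (r : S → A → ℝ)
    (hr : ∀ s a, r s a =
      -(if a = f1 s then 0 else ζ s a) + (V s - γ * ∑ s', p s a s' * V s'))
    (M1 Mi : Matrix S S ℝ)
    (hM1 : ∀ s s', M1 s s' = p s (f1 s) s')
    (hMi : ∀ s s', Mi s s' = p s (fi s) s')
    (hgap : ∀ s, ((1 - γ • M1)⁻¹ *ᵥ (fun s => r s (f1 s))) s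
              - ((1 - γ • Mi)⁻¹ *ᵥ (fun s => r s (fi s))) s = ξ) :
    ∀ s, fi s ≠ f1 s → ζ s (fi s) = ξ * (1 - γ) := by
  have hMi_mem := policyMatrix_mem_rowStochastic hp0 hp1 hMi
  have hU1 := isUnit_det_one_sub_smul_of_mem_rowStochastic
    (policyMatrix_mem_rowStochastic hp0 hp1 hM1) hγ0 hγ1
  have hUi := isUnit_det_one_sub_smul_of_mem_rowStochastic hMi_mem hγ0 hγ1
  set z : S → ℝ := fun s => if fi s = f1 s then 0 else ζ s (fi s) with hz
  have hr1 : (fun s => r s (f1 s)) = (1 - γ • M1) *ᵥ V := by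
    funext s
    rw [one_sub_smul_mulVec_apply, hr]
    simp [hM1]
  have hri : (fun s => r s (fi s)) = (1 - γ • Mi) *ᵥ V - z := by
    funext s
    rw [Pi.sub_apply, one_sub_smul_mulVec_apply, hr]
    simp only [hMi, hz]
    ring
  have hvalue : (1 - γ • Mi)⁻¹ *ᵥ z = fun _ => ξ := by
    funext s
    have := hgap s
    rw [hr1, hri, mulVec_sub, inv_mulVec_mulVec_cancel hU1, inv_mulVec_mulVec_cancel hUi] at this
    simpa using this
  intro s hs
  have := congrFun (mulVec_inv_mulVec_cancel hUi z) s
  rw [hvalue, one_sub_smul_mulVec_const_of_mem_rowStochastic hMi_mem] at this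
  simpa [hz, hs] using this.symm

/-- For deterministic policies `π_{E_1}` (given by `f1`) and
`π_{E_i}` (given by `fi`), if the performance-gap constraint holds with
equality at every state for a reward `r = −B̄^{π_{E_1}}ζ + (E−γP)V` with
`ζ ≥ 0`, then `ζ(s, fi s) = ξ_i(1−γ)` at every state where the two policies
differ (i.e. where `π_{E_1}(a|s)=0` and `π_{E_i}(a|s)=1`). -/
theorem stmt_7 {S A : Type} [Fintype S] [DecidableEq S] [Fintype A] [DecidableEq A]
    (p : S → A → S → ℝ) (hp0 : ∀ s a s', 0 ≤ p s a s')
    (hp1 : ∀ s a, ∑ s', p s a s' = 1)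
    (f1 fi : S → A)
    (γ : ℝ) (hγ0 : 0 ≤ γ) (hγ1 : γ < 1)
    (ξ : ℝ) (hξ : 0 < ξ)
    (ζ : S → A → ℝ) (hζ : ∀ s a, 0 ≤ ζ s a) (V : S → ℝ)
    (r : S → A → ℝ)
    (hr : ∀ s a, r s a =
      -(if a = f1 s then 0 else ζ s a) + (V s - γ * ∑ s', p s a s' * V s'))
    (M1 Mi : Matrix S S ℝ)
    (hM1 : ∀ s s', M1 s s' = p s (f1 s) s')
    (hMi : ∀ s s', Mi s s' = p s (fi s) s')
    (hgap : ∀ s, ((1 - γ • M1)⁻¹ *ᵥ (fun s => r s (f1 s))) s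
              - ((1 - γ • Mi)⁻¹ *ᵥ (fun s => r s (fi s))) s = ξ) :
    ∀ s, fi s ≠ f1 s → ζ s (fi s) = ξ * (1 - γ) :=
  stmt_7_general p hp0 hp1 f1 fi γ hγ0 hγ1 ξ ζ V r hr M1 Mi hM1 hMi hgap
end
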